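/- Under the hypotheses S = Q D Q' (Q orthogonal, D = diag(λ₁,...,λₙ)) and with P the permutation matrix of the construction, the matrix exponential of tA, where A = [[0, I], [-αS - δI, -βS - γI]], equals diag(Q,Q) · P · diag(exp(tG₁),...,exp(tGₙ)) · P' · diag(Q',Q'), where Gᵢ = [[0, 1], [-αλᵢ - δ, -βλᵢ - γ]]. -/

import Mathlib

/-!
Conjugation by `diag(Q, Q)` diagonalises all four blocks of `A` at once, turning it into the
`2 × 2` block matrix of the diagonal matrices with entries `0`, `1`, `-αλᵢ - δ`, `-βλᵢ - γ`;
the permutation `P` regroups this into `diag(G₁, …, Gₙ)`. The exponential commutes with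
conjugation by the orthogonal matrix `diag(Q, Q)` and with reindexing, and acts blockwise on a
block-diagonal matrix.
-/

open Matrix NormedSpace

/-- The permutation matrix `P` of the construction: row `i` (first copy) has its `1`
in column `(i,0)` (i.e. column `2i-1`), and row `n+i` (second copy) has its `1` in
column `(i,1)` (i.e. column `2i`). -/
noncomputable def permP (n : ℕ) : Matrix (Fin n ⊕ Fin n) (Fin n × Fin 2) ℝ :=
  fun x q =>
    if q = Sum.elim (fun i => (i, (0 : Fin 2))) (fun i => (i, (1 : Fin 2))) x then 1 else 0

/-- Block diagonal matrix with 2×2 blocks `M i`. -/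
noncomputable def blockDiag2 (n : ℕ) (M : Fin n → Matrix (Fin 2) (Fin 2) ℝ) :
    Matrix (Fin n × Fin 2) (Fin n × Fin 2) ℝ :=
  fun p q => if p.1 = q.1 then M p.1 p.2 q.2 else 0

namespace Matrix

variable {m k 𝔸 : Type*} [Fintype m] [DecidableEq m] [Fintype k] [DecidableEq k]

theorem exp_submatrix_equiv [Ring 𝔸] [TopologicalSpace 𝔸] [IsTopologicalRing 𝔸] [Algebra ℚ 𝔸]
    [T2Space 𝔸] (e : m ≃ k) (A : Matrix k k 𝔸) :
    exp (A.submatrix e e) = (exp A).submatrix e e := by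
  let φ := reindexAlgEquiv ℚ 𝔸 e.symm
  change exp (φ A) = φ (exp A)
  simp only [exp_eq_tsum_rat]
  rw [Function.LeftInverse.map_tsum (g := φ) _ (continuous_id.matrix_submatrix _ _)
    (g' := φ.symm) (continuous_id.matrix_submatrix _ _) φ.left_inv]
  simp only [map_smul, map_pow]

theorem exp_conj_of_mul_transpose_eq_one [NormedCommRing 𝔸] [NormedAlgebra ℚ 𝔸]
    [CompleteSpace 𝔸] {V : Matrix m m 𝔸} (hV : V * Vᵀ = 1) (A : Matrix m m 𝔸) :
    exp (V * A * Vᵀ) = V * exp A * Vᵀ := by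
  simpa only [inv_eq_right_inv hV] using exp_conj V A (IsUnit.of_mul_eq_one Vᵀ hV)

end Matrix

def sumEquivProdFinTwo (n : ℕ) : Fin n ⊕ Fin n ≃ Fin n × Fin 2 where
  toFun := Sum.elim (fun i => (i, 0)) (fun i => (i, 1))
  invFun p := if p.2 = 0 then .inl p.1 else .inr p.1
  left_inv x := by cases x <;> simp
  right_inv := by
    rintro ⟨i, a⟩
    fin_cases a <;> simp

theorem permP_eq_toMatrix (n : ℕ) : permP n = (sumEquivProdFinTwo n).toPEquiv.toMatrix := by
  ext x q
  simp [permP, sumEquivProdFinTwo, eq_comm]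

theorem permP_mul_mul_transpose {n : ℕ} (C : Matrix (Fin n × Fin 2) (Fin n × Fin 2) ℝ) :
    permP n * C * (permP n)ᵀ = C.submatrix (sumEquivProdFinTwo n) (sumEquivProdFinTwo n) := by
  rw [permP_eq_toMatrix, ← PEquiv.toMatrix_symm, ← Equiv.toPEquiv_symm,
    PEquiv.toMatrix_toPEquiv_mul, PEquiv.mul_toMatrix_toPEquiv, submatrix_submatrix,
    Equiv.symm_symm]
  rfl

theorem blockDiag2_eq_submatrix_blockDiagonal {n : ℕ} (M : Fin n → Matrix (Fin 2) (Fin 2) ℝ) :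
    blockDiag2 n M = (blockDiagonal M).submatrix (Equiv.prodComm _ _) (Equiv.prodComm _ _) := by
  ext ⟨i, a⟩ ⟨j, b⟩
  simp [blockDiag2, blockDiagonal_apply]

theorem smul_blockDiag2 {n : ℕ} (t : ℝ) (M : Fin n → Matrix (Fin 2) (Fin 2) ℝ) :
    t • blockDiag2 n M = blockDiag2 n (fun i => t • M i) := by
  ext p q
  simp [blockDiag2]

theorem exp_blockDiag2 {n : ℕ} (M : Fin n → Matrix (Fin 2) (Fin 2) ℝ) :
    exp (blockDiag2 n M) = blockDiag2 n (fun i => exp (M i)) := by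
  have hpi : exp M = fun i => exp (M i) := by
    open scoped Norms.Operator in exact Pi.exp_def M
  rw [blockDiag2_eq_submatrix_blockDiagonal, exp_submatrix_equiv, exp_blockDiagonal, hpi,
    blockDiag2_eq_submatrix_blockDiagonal]

theorem exp_permP_conj {n : ℕ} (C : Matrix (Fin n × Fin 2) (Fin n × Fin 2) ℝ) :
    exp (permP n * C * (permP n)ᵀ) = permP n * exp C * (permP n)ᵀ := by
  rw [permP_mul_mul_transpose, exp_submatrix_equiv, permP_mul_mul_transpose]

theorem permP_mul_blockDiag2_mul_transpose {n : ℕ} (a b c d : Fin n → ℝ) :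
    permP n * blockDiag2 n (fun i => !![a i, b i; c i, d i]) * (permP n)ᵀ =
      fromBlocks (diagonal a) (diagonal b) (diagonal c) (diagonal d) := by
  rw [permP_mul_mul_transpose]
  ext (i | i) (j | j) <;> by_cases h : i = j <;> simp [blockDiag2, sumEquivProdFinTwo, h]

theorem fromBlocks_companion_eq_conj {n : ℕ} {S Q : Matrix (Fin n) (Fin n) ℝ} {lam : Fin n → ℝ}
    (hQ : Q * Qᵀ = 1) (hS : S = Q * diagonal lam * Qᵀ) (α β γ δ : ℝ) :
    fromBlocks 0 1 (-(α • S) - δ • 1) (-(β • S) - γ • 1) =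
      fromBlocks Q 0 0 Q *
        (permP n * blockDiag2 n (fun i => !![0, 1; -(α * lam i) - δ, -(β * lam i) - γ]) *
          (permP n)ᵀ) * (fromBlocks Q 0 0 Q)ᵀ := by
  have hconj : ∀ a b : ℝ,
      Q * diagonal (fun i => -(a * lam i) - b) * Qᵀ = -(a • S) - b • 1 := by
    intro a b
    have : diagonal (fun i => -(a * lam i) - b) = -(a • diagonal lam) - b • 1 := by
      ext i j
      by_cases h : i = j <;> simp [one_apply, h]
    rw [this, hS]
    simp only [Matrix.mul_sub, Matrix.sub_mul, Matrix.mul_neg, Matrix.neg_mul, Matrix.mul_smul,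
      Matrix.smul_mul, Matrix.mul_one, hQ]
  rw [permP_mul_blockDiag2_mul_transpose, fromBlocks_transpose, fromBlocks_multiply,
    fromBlocks_multiply]
  simp [hconj, hQ]

theorem stmt_8 (n : ℕ) (α β γ δ t : ℝ)
    (S Q : Matrix (Fin n) (Fin n) ℝ) (lam : Fin n → ℝ)
    (hQ : Q * Qᵀ = 1)
    (hS : S = Q * Matrix.diagonal lam * Qᵀ) :
    NormedSpace.exp (t • fromBlocks 0 1 (-(α • S) - δ • 1) (-(β • S) - γ • 1)) =
      fromBlocks Q 0 0 Q * permP n *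
        blockDiag2 n (fun i =>
          NormedSpace.exp (t • (!![0, 1; -(α * lam i) - δ, -(β * lam i) - γ] :
            Matrix (Fin 2) (Fin 2) ℝ))) *
        (permP n)ᵀ * fromBlocks Qᵀ 0 0 Qᵀ := by
  have hV : fromBlocks Q 0 0 Q * (fromBlocks Q 0 0 Q)ᵀ = 1 := by
    simp [fromBlocks_transpose, fromBlocks_multiply, hQ]
  rw [fromBlocks_companion_eq_conj hQ hS, ← Matrix.smul_mul, ← Matrix.mul_smul,
    ← Matrix.smul_mul, ← Matrix.mul_smul, smul_blockDiag2, exp_conj_of_mul_transpose_eq_one hV,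
    exp_permP_conj, exp_blockDiag2]
  simp only [fromBlocks_transpose, transpose_zero, Matrix.mul_assoc]
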